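/- Let H be a real inner product space, γ > 0, and for t = 1, …, T let w_t, w_t*, ∇_t ∈ H satisfy w_t = w_{t−1} − γ∇_t, ‖∇_t‖ ≤ 1, ‖w_t‖ ≤ W, ‖w_t*‖ ≤ W, ‖w₀‖ ≤ W, ‖w₀*‖ ≤ W. Then Σ_{t=1}^T ⟨∇_t, w_{t−1} − w*_{t−1}⟩ ≤ (1/(2γ))·(4W² + Tγ²) + (1/(2γ))·Σ_{t=1}^T ( ‖w_t*‖² − ‖w*_{t−1}‖² − 2⟨w_t, w_t* − w*_{t−1}⟩ ). -/
import Mathlib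

open RealInnerProductSpace

lemma step_eq {H : Type*} [NormedAddCommGroup H] [InnerProductSpace ℝ H]
    (γ : ℝ) (a s s' g : H) :
    ⟪g, a - s⟫ * (2 * γ)
      = ‖a - s‖ ^ 2 - ‖(a - γ • g) - s'‖ ^ 2 + γ ^ 2 * ‖g‖ ^ 2
        + (‖s'‖ ^ 2 - ‖s‖ ^ 2 - 2 * ⟪a - γ • g, s' - s⟫) := by
  simp only [norm_sub_sq_real, inner_sub_left, inner_sub_right, real_inner_smul_left,
    real_inner_smul_right, norm_smul, Real.norm_eq_abs]
  rw [real_inner_comm g a]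
  have h2 : (|γ| * ‖g‖) ^ 2 = γ ^ 2 * ‖g‖ ^ 2 := by rw [mul_pow, sq_abs]
  nlinarith [h2]

/-- Noise-free core of the dynamic-regret decomposition in Theorem 2 (ii) of SAFE. -/
theorem stmt_15 {H : Type*} [NormedAddCommGroup H] [InnerProductSpace ℝ H]
    (T : ℕ) (γ W : ℝ) (hγ : 0 < γ)
    (w wstar grad : ℕ → H)
    (hupdate : ∀ t, w (t + 1) = w t - γ • grad (t + 1))
    (hgrad : ∀ t, ‖grad t‖ ≤ 1)
    (hw : ∀ t, ‖w t‖ ≤ W) (hwstar : ∀ t, ‖wstar t‖ ≤ W) :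
    ∑ t ∈ Finset.range T, ⟪grad (t + 1), w t - wstar t⟫
      ≤ (1 / (2 * γ)) * (4 * W ^ 2 + (T : ℝ) * γ ^ 2)
        + (1 / (2 * γ)) * ∑ t ∈ Finset.range T,
            (‖wstar (t + 1)‖ ^ 2 - ‖wstar t‖ ^ 2
              - 2 * ⟪w (t + 1), wstar (t + 1) - wstar t⟫) := by
  set E : ℝ := ∑ t ∈ Finset.range T,
      (‖wstar (t + 1)‖ ^ 2 - ‖wstar t‖ ^ 2
        - 2 * ⟪w (t + 1), wstar (t + 1) - wstar t⟫) with hE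
  have hW : 0 ≤ W := le_trans (norm_nonneg _) (hw 0)
  have hkey : (∑ t ∈ Finset.range T, ⟪grad (t + 1), w t - wstar t⟫) * (2 * γ)
      = (∑ t ∈ Finset.range T,
          (‖w t - wstar t‖ ^ 2 - ‖w (t + 1) - wstar (t + 1)‖ ^ 2))
        + (∑ t ∈ Finset.range T, γ ^ 2 * ‖grad (t + 1)‖ ^ 2) + E := by
    rw [Finset.sum_mul, hE, ← Finset.sum_add_distrib, ← Finset.sum_add_distrib]
    refine Finset.sum_congr rfl fun t _ => ?_
    have := step_eq γ (w t) (wstar t) (wstar (t + 1)) (grad (t + 1))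
    rw [← hupdate t] at this
    linarith [this]
  have htel : (∑ t ∈ Finset.range T,
      (‖w t - wstar t‖ ^ 2 - ‖w (t + 1) - wstar (t + 1)‖ ^ 2))
      = ‖w 0 - wstar 0‖ ^ 2 - ‖w T - wstar T‖ ^ 2 :=
    Finset.sum_range_sub' (fun t => ‖w t - wstar t‖ ^ 2) T
  have h0 : ‖w 0 - wstar 0‖ ^ 2 ≤ 4 * W ^ 2 := by
    have h1 : ‖w 0 - wstar 0‖ ≤ 2 * W := by
      calc ‖w 0 - wstar 0‖ ≤ ‖w 0‖ + ‖wstar 0‖ := norm_sub_le _ _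
        _ ≤ 2 * W := by linarith [hw 0, hwstar 0]
    nlinarith [norm_nonneg (w 0 - wstar 0)]
  have hg : (∑ t ∈ Finset.range T, γ ^ 2 * ‖grad (t + 1)‖ ^ 2) ≤ (T : ℝ) * γ ^ 2 := by
    calc (∑ t ∈ Finset.range T, γ ^ 2 * ‖grad (t + 1)‖ ^ 2)
        ≤ ∑ t ∈ Finset.range T, γ ^ 2 * 1 := by
          refine Finset.sum_le_sum fun t _ => ?_
          have h1 : ‖grad (t + 1)‖ ^ 2 ≤ 1 := by
            nlinarith [hgrad (t + 1), norm_nonneg (grad (t + 1))]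
          nlinarith [sq_nonneg γ]
      _ = (T : ℝ) * γ ^ 2 := by simp [mul_comm]
  have hub : (∑ t ∈ Finset.range T, ⟪grad (t + 1), w t - wstar t⟫) * (2 * γ)
      ≤ 4 * W ^ 2 + (T : ℝ) * γ ^ 2 + E := by
    rw [hkey, htel]
    nlinarith [sq_nonneg ‖w T - wstar T‖]
  have h2γ : (0 : ℝ) < 2 * γ := by linarith
  calc (∑ t ∈ Finset.range T, ⟪grad (t + 1), w t - wstar t⟫)
      = ((∑ t ∈ Finset.range T, ⟪grad (t + 1), w t - wstar t⟫) * (2 * γ)) / (2 * γ) := by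
        field_simp
    _ ≤ (4 * W ^ 2 + (T : ℝ) * γ ^ 2 + E) / (2 * γ) := by gcongr
    _ = (1 / (2 * γ)) * (4 * W ^ 2 + (T : ℝ) * γ ^ 2) + (1 / (2 * γ)) * E := by ring
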